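/- Let Ω ⊆ ℝ^m be open and convex, e : Ω → ℝ^{m×m} a C² symmetric-matrix field satisfying the Saint-Venant compatibility relations ∂²_{lj}e_{ik} + ∂²_{ki}e_{jl} − ∂²_{li}e_{jk} − ∂²_{jk}e_{il} = 0. Then there exists a C³ vector field V : Ω → ℝ^m with ½(∂_{x_i}V_j + ∂_{x_j}V_i) = e_{ij} on Ω for all i, j. -/

import Mathlib

/-!
The right-hand sides `∂_j e_il − ∂_i e_jl`, viewed for fixed `i, j` as a 1-form in `l`, are closed
precisely by the Saint-Venant relations, so the Poincaré lemma on the convex set `Ω` gives an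
antisymmetric field `p` with `∂_l p_ij = ∂_j e_il − ∂_i e_jl`. The rows of `q = p + e` are then
closed 1-forms as well, since `e` is symmetric; a second application of the Poincaré lemma gives
`u_i` with `∂_j u_i = q_ij`, and the symmetric part of `∇u` is that of `q`, namely `e`.
-/

noncomputable def pd {m : ℕ} (i : Fin m) (f : (Fin m → ℝ) → ℝ) (x : Fin m → ℝ) : ℝ :=
  fderiv ℝ f x (Pi.single i 1)

theorem Convex.exists_contDiffOn_forall_hasFDerivAt {E F : Type*} [NormedAddCommGroup E]
    [NormedSpace ℝ E] [NormedAddCommGroup F] [NormedSpace ℝ F] [CompleteSpace F]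
    {s : Set E} (hs : Convex ℝ s) (hso : IsOpen s) {n : ℕ∞} (hn : 1 ≤ n)
    {ω : E → E →L[ℝ] F} (hω : ContDiffOn ℝ n ω s)
    (hdω : ∀ a ∈ s, ∀ x y, fderiv ℝ ω a x y = fderiv ℝ ω a y x) :
    ∃ f, ContDiffOn ℝ (n + 1) f s ∧ ∀ a ∈ s, HasFDerivAt f (ω a) a := by
  obtain ⟨f, hf⟩ := hs.exists_forall_hasFDerivAt_of_fderiv_symmetric hso
    (hω.differentiableOn (by exact_mod_cast (zero_lt_one.trans_le hn).ne')) hdω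
  refine ⟨f, (contDiffOn_succ_iff_fderiv_of_isOpen hso).2 ⟨fun a ha ↦
    (hf a ha).differentiableAt.differentiableWithinAt, by simp, ?_⟩, hf⟩
  exact hω.congr fun a ha ↦ (hf a ha).fderiv

section pd

variable {m : ℕ}

theorem fderiv_apply_eq_sum_pd (f : (Fin m → ℝ) → ℝ) (x v : Fin m → ℝ) :
    fderiv ℝ f x v = ∑ l, v l * pd l f x := by
  conv_lhs => rw [pi_eq_sum_univ' v, map_sum]
  simp [pd, map_smul]

theorem pd_add {f g : (Fin m → ℝ) → ℝ} {x : Fin m → ℝ} (hf : DifferentiableAt ℝ f x)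
    (hg : DifferentiableAt ℝ g x) (i : Fin m) :
    pd i (fun y ↦ f y + g y) x = pd i f x + pd i g x := by
  simp [pd, fderiv_fun_add hf hg]

theorem pd_sub {f g : (Fin m → ℝ) → ℝ} {x : Fin m → ℝ} (hf : DifferentiableAt ℝ f x)
    (hg : DifferentiableAt ℝ g x) (i : Fin m) :
    pd i (fun y ↦ f y - g y) x = pd i f x - pd i g x := by
  simp [pd, fderiv_fun_sub hf hg]

theorem pd_const_mul (c : ℝ) (f : (Fin m → ℝ) → ℝ) (i : Fin m) (x : Fin m → ℝ) :
    pd i (fun y ↦ c * f y) x = c * pd i f x := by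
  simp [pd, show (fun y ↦ c * f y) = c • f from rfl, fderiv_const_smul_field]

theorem ContDiffOn.pd {n : WithTop ℕ∞} {Ω : Set (Fin m → ℝ)} (hΩ : IsOpen Ω)
    {f : (Fin m → ℝ) → ℝ} (hf : ContDiffOn ℝ (n + 1) f Ω) (i : Fin m) :
    ContDiffOn ℝ n (pd i f) Ω :=
  (hf.fderiv_of_isOpen hΩ le_rfl).clm_apply contDiffOn_const

theorem ContDiffAt.pd_comm {f : (Fin m → ℝ) → ℝ} {x : Fin m → ℝ} (hf : ContDiffAt ℝ 2 f x)
    (i j : Fin m) : pd i (pd j f) x = pd j (pd i f) x := by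
  have hdf : DifferentiableAt ℝ (fderiv ℝ f) x :=
    (hf.fderiv_right (m := 1) (by norm_num)).differentiableAt (by norm_num)
  unfold _root_.pd
  simp only [fderiv_clm_apply hdf (differentiableAt_const _)]
  simpa using hf.isSymmSndFDerivAt (by simp) (Pi.single i 1) (Pi.single j 1)

end pd

theorem Convex.exists_contDiffOn_forall_pd_eq {m : ℕ} {Ω : Set (Fin m → ℝ)} (hΩc : Convex ℝ Ω)
    (hΩo : IsOpen Ω) {n : ℕ∞} (hn : 1 ≤ n) {f : Fin m → (Fin m → ℝ) → ℝ}
    (hf : ∀ l, ContDiffOn ℝ n (f l) Ω)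
    (hclosed : ∀ k l, ∀ x ∈ Ω, pd k (f l) x = pd l (f k) x) :
    ∃ u, ContDiffOn ℝ (n + 1) u Ω ∧ ∀ l, ∀ x ∈ Ω, pd l u x = f l x := by
  set ω : (Fin m → ℝ) → (Fin m → ℝ) →L[ℝ] ℝ :=
    fun y ↦ ∑ l, f l y • (ContinuousLinearMap.proj l : (Fin m → ℝ) →L[ℝ] ℝ)
  have hdiff : ∀ l, ∀ a ∈ Ω, DifferentiableAt ℝ (f l) a := fun l a ha ↦
    ((hf l).differentiableOn (by exact_mod_cast (zero_lt_one.trans_le hn).ne')).differentiableAt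
      (hΩo.mem_nhds ha)
  have hdω : ∀ a ∈ Ω, HasFDerivAt ω (∑ l, (fderiv ℝ (f l) a).smulRight
      (ContinuousLinearMap.proj l : (Fin m → ℝ) →L[ℝ] ℝ)) a := fun a ha ↦
    HasFDerivAt.fun_sum fun l _ ↦
      (hdiff l a ha).hasFDerivAt.smul_const (ContinuousLinearMap.proj l : (Fin m → ℝ) →L[ℝ] ℝ)
  obtain ⟨u, hu, hωu⟩ := hΩc.exists_contDiffOn_forall_hasFDerivAt hΩo hn (ω := ω)
    (ContDiffOn.sum fun l _ ↦ (hf l).smul contDiffOn_const) fun a ha x y ↦ by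
      simp only [(hdω a ha).fderiv, _root_.sum_apply, ContinuousLinearMap.smulRight_apply,
        _root_.smul_apply, ContinuousLinearMap.proj_apply, fderiv_apply_eq_sum_pd, smul_eq_mul,
        Finset.sum_mul]
      rw [Finset.sum_comm]
      refine Finset.sum_congr rfl fun k _ ↦ Finset.sum_congr rfl fun c _ ↦ ?_
      rw [hclosed k c a ha]
      ring
  refine ⟨u, hu, fun l x hx ↦ ?_⟩
  simp [pd, (hωu x hx).fderiv, ω, Pi.single_apply]

section SaintVenant

variable {m : ℕ} {Ω : Set (Fin m → ℝ)}

def SaintVenantCompatible (Ω : Set (Fin m → ℝ)) (e : Fin m → Fin m → (Fin m → ℝ) → ℝ) : Prop :=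
  ∀ i j k l : Fin m, ∀ x ∈ Ω,
    pd l (fun y ↦ pd j (e i k) y) x + pd k (fun y ↦ pd i (e j l) y) x
      - pd l (fun y ↦ pd i (e j k) y) x - pd j (fun y ↦ pd k (e i l) y) x = 0

theorem SaintVenantCompatible.exists_antisymm_pd_eq (hΩc : Convex ℝ Ω) (hΩo : IsOpen Ω)
    {e : Fin m → Fin m → (Fin m → ℝ) → ℝ} (he : ∀ i j, ContDiffOn ℝ 2 (e i j) Ω)
    (hSV : SaintVenantCompatible Ω e) :
    ∃ p : Fin m → Fin m → (Fin m → ℝ) → ℝ, (∀ i j, ContDiffOn ℝ 2 (p i j) Ω) ∧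
      (∀ i j, p j i = -p i j) ∧
      ∀ i j l, ∀ x ∈ Ω, pd l (p i j) x = pd j (e i l) x - pd i (e j l) x := by
  have hde : ∀ i j k, ContDiffOn ℝ 1 (pd k (e i j)) Ω := fun i j k ↦ (he i j).pd (n := 1) hΩo k
  have hde' : ∀ i j k, ∀ x ∈ Ω, DifferentiableAt ℝ (pd k (e i j)) x := fun i j k x hx ↦
    ((hde i j k).differentiableOn one_ne_zero).differentiableAt (hΩo.mem_nhds hx)
  have hp₀ : ∀ i j, ∃ p₀, ContDiffOn ℝ 2 p₀ Ω ∧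
      ∀ l, ∀ x ∈ Ω, pd l p₀ x = pd j (e i l) x - pd i (e j l) x := fun i j ↦
    hΩc.exists_contDiffOn_forall_pd_eq hΩo le_rfl (fun l ↦ (hde i l j).sub (hde j l i))
      fun k l x hx ↦ by
        rw [pd_sub (hde' i l j x hx) (hde' j l i x hx), pd_sub (hde' i k j x hx) (hde' j k i x hx),
          ((he i l).contDiffAt (hΩo.mem_nhds hx)).pd_comm k j]
        linarith [hSV i j k l x hx]
  choose p₀ hp₀ hpd₀ using hp₀
  -- the prescribed derivative is antisymmetric in `i, j`, so antisymmetrizing `p₀` preserves it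
  refine ⟨fun i j y ↦ 2⁻¹ * (p₀ i j y - p₀ j i y), fun i j ↦ ?_, fun i j ↦ ?_, fun i j l x hx ↦ ?_⟩
  · exact contDiffOn_const.mul ((hp₀ i j).sub (hp₀ j i))
  · funext y
    rw [Pi.neg_apply]
    ring
  · rw [pd_const_mul, pd_sub, hpd₀ i j l x hx, hpd₀ j i l x hx]
    · ring
    all_goals exact ((hp₀ _ _).differentiableOn two_ne_zero).differentiableAt (hΩo.mem_nhds hx)

theorem exists_pd_eq_add_of_pd_eq_sub (hΩc : Convex ℝ Ω) (hΩo : IsOpen Ω)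
    {e p : Fin m → Fin m → (Fin m → ℝ) → ℝ} (he : ∀ i j, ContDiffOn ℝ 2 (e i j) Ω)
    (he_symm : ∀ i j x, e i j x = e j i x) (hp : ∀ i j, ContDiffOn ℝ 2 (p i j) Ω)
    (hpd : ∀ i j l, ∀ x ∈ Ω, pd l (p i j) x = pd j (e i l) x - pd i (e j l) x) :
    ∃ u : Fin m → (Fin m → ℝ) → ℝ, (∀ i, ContDiffOn ℝ 3 (u i) Ω) ∧
      ∀ i j, ∀ x ∈ Ω, pd j (u i) x = p i j x + e i j x := by
  have hpe : ∀ i j k, ∀ x ∈ Ω,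
      pd k (fun y ↦ p i j y + e i j y) x = pd j (e i k) x - pd i (e j k) x + pd k (e i j) x := by
    intro i j k x hx
    rw [pd_add (((hp i j).differentiableOn two_ne_zero).differentiableAt (hΩo.mem_nhds hx))
      (((he i j).differentiableOn two_ne_zero).differentiableAt (hΩo.mem_nhds hx)), hpd i j k x hx]
  have hu : ∀ i, ∃ u, ContDiffOn ℝ 3 u Ω ∧ ∀ j, ∀ x ∈ Ω, pd j u x = p i j x + e i j x :=
    fun i ↦ hΩc.exists_contDiffOn_forall_pd_eq hΩo (n := 2) one_le_two
      (fun j ↦ (hp i j).add (he i j)) fun k l x hx ↦ by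
        rw [hpe i l k x hx, hpe i k l x hx, show e l k = e k l from funext (he_symm l k)]
        ring
  choose u hu hpdu using hu
  exact ⟨u, hu, hpdu⟩

end SaintVenant

theorem stmt18 (m : ℕ) (Ω : Set (Fin m → ℝ)) (hΩo : IsOpen Ω) (hΩc : Convex ℝ Ω)
    (e : Fin m → Fin m → (Fin m → ℝ) → ℝ)
    (he : ∀ i j, ContDiffOn ℝ 2 (e i j) Ω)
    (hesym : ∀ i j x, e i j x = e j i x)
    (hSV : ∀ i j k l : Fin m, ∀ x ∈ Ω,
      pd l (fun y => pd j (e i k) y) x + pd k (fun y => pd i (e j l) y) x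
        - pd l (fun y => pd i (e j k) y) x - pd j (fun y => pd k (e i l) y) x = 0) :
    ∃ V : (Fin m → ℝ) → (Fin m → ℝ), ContDiffOn ℝ 3 V Ω ∧
      ∀ i j : Fin m, ∀ x ∈ Ω,
        (pd i (fun y => V y j) x + pd j (fun y => V y i) x) / 2 = e i j x := by
  obtain ⟨p, hp, hp_antisymm, hpd⟩ :=
    SaintVenantCompatible.exists_antisymm_pd_eq hΩc hΩo he hSV
  obtain ⟨u, hu, hpdu⟩ := exists_pd_eq_add_of_pd_eq_sub hΩc hΩo he hesym hp hpd
  refine ⟨fun y i ↦ u i y, contDiffOn_pi.2 hu, fun i j x hx ↦ ?_⟩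
  rw [hpdu j i x hx, hpdu i j x hx, hp_antisymm, Pi.neg_apply, hesym j i]
  ring
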